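/- arXiv:2205.10671 — 2 statements merged into one kernel-verified Lean document; each statement's English description precedes it below -/
import Mathlib

section
/- Consider two two-armed Bernoulli bandit instances: Q₁ with behavior probabilities (1/2, 1/2) and reward means (1, 0), and Q₂ parameterized by behavior probability p for arm 1 and reward means (α, β). The squared Hellinger distance between the joint distributions of (action, reward) satisfies Hel²(Q₁, Q₂) = (1/2)[(1/√2 − √(pα))² + p(1−α) + (1−p)β + (1/√2 − √((1−p)(1−β)))²], and inf over p ∈ [0,1], α, β ∈ [0,1] with β > α of Hel²(Q₁, Q₂) equals 1 − 1/√2. -/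
/-- Squared Hellinger distance between distributions on a finite type. -/
noncomputable def sqHellingerFin {X : Type*} [Fintype X] (P Q : X → ℝ) : ℝ :=
  (1 / 2) * ∑ x, (Real.sqrt (P x) - Real.sqrt (Q x)) ^ 2

/-- Distribution of (arm, reward) for instance Q₁: arm uniform, reward 1 iff arm 1. -/
noncomputable def banditQ1 : Bool × Bool → ℝ :=
  fun p => if p.1 then (if p.2 then 1 / 2 else 0) else (if p.2 then 0 else 1 / 2)

/-- Distribution of (arm, reward) for instance Q₂ with behavior probability p of
arm 1 and reward means α (arm 1), β (arm 2). -/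
noncomputable def banditQ2 (p α β : ℝ) : Bool × Bool → ℝ :=
  fun x => if x.1 then (if x.2 then p * α else p * (1 - α))
           else (if x.2 then (1 - p) * β else (1 - p) * (1 - β))

/-!
Since both distributions have total mass one, `Hel² = 1 - BC` with
`BC = ∑ √(Q₁ x Q₂ x)` the Bhattacharyya coefficient, and as `Q₁` lives on the two
points `(1, 1)` and `(2, 0)`, `BC = (√(pα) + √((1 - p)(1 - β))) / √2`. By AM–GM,
`√(pα) + √((1 - p)(1 - β)) ≤ (2 + α - β) / 2 ≤ 1` whenever `α ≤ β`, so
`Hel² ≥ 1 - 1/√2`. The bound is approached by `p = β = 1`, `α = s²` with `s → 1⁻`,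
where `Hel² = 1 - s/√2`.
-/

open Real Filter Topology

lemma Real.sqrt_mul_le_half_add {x y : ℝ} (hx : 0 ≤ x) (hy : 0 ≤ y) :
    √(x * y) ≤ (x + y) / 2 := by
  rw [sqrt_mul hx]
  nlinarith [two_mul_le_add_sq √x √y, sq_sqrt hx, sq_sqrt hy]

lemma sqHellingerFin_eq_one_sub_sum_sqrt_mul_sqrt {X : Type*} [Fintype X] {P Q : X → ℝ}
    (hP : ∀ x, 0 ≤ P x) (hQ : ∀ x, 0 ≤ Q x) (hP1 : ∑ x, P x = 1) (hQ1 : ∑ x, Q x = 1) :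
    sqHellingerFin P Q = 1 - ∑ x, √(P x) * √(Q x) := by
  have hsq : ∀ x, (√(P x) - √(Q x)) ^ 2 = P x + Q x - 2 * (√(P x) * √(Q x)) := fun x => by
    rw [sub_sq, sq_sqrt (hP x), sq_sqrt (hQ x)]
    ring
  simp only [sqHellingerFin, hsq, Finset.sum_sub_distrib, Finset.sum_add_distrib,
    ← Finset.mul_sum, hP1, hQ1]
  ring

lemma Real.sqrt_one_div_two : √(1 / 2 : ℝ) = 1 / √2 := by
  rw [sqrt_div' _ zero_le_two, sqrt_one]

section Bandit

variable {p α β : ℝ}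

lemma banditQ1_nonneg (x : Bool × Bool) : 0 ≤ banditQ1 x := by
  unfold banditQ1
  split_ifs <;> norm_num

lemma sum_banditQ1 : ∑ x, banditQ1 x = 1 := by
  simp only [banditQ1, Fintype.sum_prod_type, Fintype.sum_bool, ↓reduceIte, Bool.false_eq_true]
  norm_num

lemma banditQ2_nonneg (hp : p ∈ Set.Icc (0 : ℝ) 1) (hα : α ∈ Set.Icc (0 : ℝ) 1)
    (hβ : β ∈ Set.Icc (0 : ℝ) 1) (x : Bool × Bool) : 0 ≤ banditQ2 p α β x := by
  obtain ⟨hp0, hp1⟩ := hp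
  obtain ⟨hα0, hα1⟩ := hα
  obtain ⟨hβ0, hβ1⟩ := hβ
  unfold banditQ2
  split_ifs <;> apply mul_nonneg <;> linarith

lemma sum_banditQ2 : ∑ x, banditQ2 p α β x = 1 := by
  simp only [banditQ2, Fintype.sum_prod_type, Fintype.sum_bool, ↓reduceIte, Bool.false_eq_true]
  ring

lemma sqHellingerFin_banditQ1_banditQ2 (hp : p ∈ Set.Icc (0 : ℝ) 1)
    (hα : α ∈ Set.Icc (0 : ℝ) 1) (hβ : β ∈ Set.Icc (0 : ℝ) 1) :
    sqHellingerFin banditQ1 (banditQ2 p α β) =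
      (1 / 2) * ((1 / √2 - √(p * α)) ^ 2 + p * (1 - α) + (1 - p) * β +
        (1 / √2 - √((1 - p) * (1 - β))) ^ 2) := by
  have hQ2 := banditQ2_nonneg hp hα hβ
  have h₁ : √(p * (1 - α)) ^ 2 = p * (1 - α) := sq_sqrt (hQ2 (true, false))
  have h₂ : √((1 - p) * β) ^ 2 = (1 - p) * β := sq_sqrt (hQ2 (false, true))
  simp only [sqHellingerFin, banditQ1, banditQ2, Fintype.sum_prod_type, Fintype.sum_bool,
    ↓reduceIte, Bool.false_eq_true]
  norm_num [sqrt_one_div_two, h₁, h₂]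
  ring

lemma sqHellingerFin_banditQ1_banditQ2_eq_one_sub (hp : p ∈ Set.Icc (0 : ℝ) 1)
    (hα : α ∈ Set.Icc (0 : ℝ) 1) (hβ : β ∈ Set.Icc (0 : ℝ) 1) :
    sqHellingerFin banditQ1 (banditQ2 p α β) = 1 - (√(p * α) + √((1 - p) * (1 - β))) / √2 := by
  rw [sqHellingerFin_eq_one_sub_sum_sqrt_mul_sqrt banditQ1_nonneg (banditQ2_nonneg hp hα hβ)
    sum_banditQ1 sum_banditQ2]
  simp only [banditQ1, banditQ2, Fintype.sum_prod_type, Fintype.sum_bool, ↓reduceIte,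
    Bool.false_eq_true]
  norm_num [sqrt_one_div_two]
  ring

lemma one_sub_one_div_sqrt_two_le_sqHellingerFin (hp : p ∈ Set.Icc (0 : ℝ) 1)
    (hα : α ∈ Set.Icc (0 : ℝ) 1) (hβ : β ∈ Set.Icc (0 : ℝ) 1) (hαβ : α ≤ β) :
    1 - 1 / √2 ≤ sqHellingerFin banditQ1 (banditQ2 p α β) := by
  rw [sqHellingerFin_banditQ1_banditQ2_eq_one_sub hp hα hβ]
  obtain ⟨hp0, hp1⟩ := hp
  have h₁ := sqrt_mul_le_half_add hp0 hα.1
  have h₂ := sqrt_mul_le_half_add (sub_nonneg.2 hp1) (sub_nonneg.2 hβ.2)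
  have hsum : √(p * α) + √((1 - p) * (1 - β)) ≤ 1 := by linarith
  gcongr

end Bandit

/-- Hellinger computation for the two-armed bandit counterexample, and the value
of the infimum over all alternative instances with β > α. -/
theorem bandit_hellinger :
    (∀ p α β : ℝ, p ∈ Set.Icc (0 : ℝ) 1 → α ∈ Set.Icc (0 : ℝ) 1 → β ∈ Set.Icc (0 : ℝ) 1 →
      sqHellingerFin banditQ1 (banditQ2 p α β) =
        (1 / 2) * ((1 / Real.sqrt 2 - Real.sqrt (p * α)) ^ 2 + p * (1 - α) + (1 - p) * β +
          (1 / Real.sqrt 2 - Real.sqrt ((1 - p) * (1 - β))) ^ 2)) ∧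
    sInf {h : ℝ | ∃ p α β : ℝ, p ∈ Set.Icc (0 : ℝ) 1 ∧ α ∈ Set.Icc (0 : ℝ) 1 ∧
        β ∈ Set.Icc (0 : ℝ) 1 ∧ α < β ∧ h = sqHellingerFin banditQ1 (banditQ2 p α β)} =
      1 - 1 / Real.sqrt 2 := by
  refine ⟨fun p α β hp hα hβ => sqHellingerFin_banditQ1_banditQ2 hp hα hβ, ?_⟩
  set S := {h : ℝ | ∃ p α β : ℝ, p ∈ Set.Icc (0 : ℝ) 1 ∧ α ∈ Set.Icc (0 : ℝ) 1 ∧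
    β ∈ Set.Icc (0 : ℝ) 1 ∧ α < β ∧ h = sqHellingerFin banditQ1 (banditQ2 p α β)}
  have hlower : 1 - 1 / √2 ∈ lowerBounds S := by
    rintro _ ⟨p, α, β, hp, hα, hβ, hαβ, rfl⟩
    exact one_sub_one_div_sqrt_two_le_sqHellingerFin hp hα hβ hαβ.le
  have hclosure : 1 - 1 / √2 ∈ closure S := by
    have hlim : Tendsto (fun s : ℝ => 1 - s / √2) (𝓝[<] 1) (𝓝 (1 - 1 / √2)) :=
      ((continuous_const.sub (continuous_id.div_const _)).tendsto 1).mono_left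
        nhdsWithin_le_nhds
    refine mem_closure_of_tendsto hlim ?_
    filter_upwards [Ioo_mem_nhdsLT zero_lt_one] with s hs
    have hs2 : s ^ 2 ∈ Set.Icc (0 : ℝ) 1 := ⟨by positivity, by nlinarith [hs.1, hs.2]⟩
    refine ⟨1, s ^ 2, 1, by simp, hs2, by simp, by nlinarith [hs.1, hs.2], ?_⟩
    rw [sqHellingerFin_banditQ1_banditQ2_eq_one_sub (by simp) hs2 (by simp)]
    simp [sqrt_sq hs.1.le]
  exact (isGLB_of_mem_closure hlower hclosure).csInf_eq (closure_nonempty_iff.1 ⟨_, hclosure⟩)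
end

section
/- Let μ be the distribution on A actions (A ≥ 8) with μ(a_k) = 2^{−k} for 1 ≤ k ≤ A−1 and μ(a_A) = 2^{−A+1}. Then for every integer n with 8 ≤ n ≤ 2^A, there exists an arm k with μ(a_k) ∈ [1/n, 2/n], and for such k, the probability that exactly one of n i.i.d. draws from μ equals a_k is at least (1 − 2/n)^{n−1} ≥ 0.1. -/
/-!
Arm `k` has weight `2^{-(k+1)}`, except the last arm which carries the leftover mass.
Taking `k + 1 = ⌊log₂ n⌋` gives weight `p = 2^{-⌊log₂ n⌋} ∈ [1/n, 2/n]`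
(at `n = 2^A` the last arm, of weight `2/n`).
Then `n p (1 - p)^{n-1} ≥ (1 - 2/n)^{n-1}`, and
`1 - x ≥ exp (-(x + x²))` for `0 ≤ x ≤ 1/2` gives `(1 - 2/n)^{n-1} ≥ exp (-9/4) > 0.1`.
-/

open Real Set

lemma Real.exp_neg_add_sq_le_one_sub {x : ℝ} (hx0 : 0 ≤ x) (hx : x ≤ 1 / 2) :
    exp (-(x + x ^ 2)) ≤ 1 - x := by
  have hquad := quadratic_le_exp_of_nonneg (by positivity : 0 ≤ x + x ^ 2)
  -- `(1 - x)(1 + t + t²/2) - 1 = x² ((1 + x)²(1 - x)/2 - x)` for `t = x + x²`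
  have key : 1 ≤ (1 - x) * exp (x + x ^ 2) := by
    nlinarith [mul_le_mul_of_nonneg_left hquad (by linarith : 0 ≤ 1 - x),
      mul_nonneg (mul_nonneg hx0 hx0) (by nlinarith : 0 ≤ (1 + x) ^ 2 * (1 - x) / 2 - x)]
  rw [exp_neg, inv_le_iff_one_le_mul₀ (exp_pos _)]
  linarith

lemma Real.exp_nine_div_four_lt_ten : exp (9 / 4) < 10 := by
  have h : exp (9 / 4) ^ 4 < 10 ^ 4 := calc
    exp (9 / 4) ^ 4 = exp 1 ^ 9 := by rw [← exp_nat_mul, ← exp_nat_mul]; norm_num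
    _ < 2.7182818286 ^ 9 := by gcongr; exact exp_one_lt_d9
    _ < 10 ^ 4 := by norm_num
  exact lt_of_pow_lt_pow_left₀ 4 (by norm_num) h

lemma one_tenth_le_one_sub_two_div_pow {n : ℕ} (hn : 4 ≤ n) :
    (0.1 : ℝ) ≤ (1 - 2 / (n : ℝ)) ^ (n - 1) := by
  have hn' : (4 : ℝ) ≤ n := by exact_mod_cast hn
  set x : ℝ := 2 / n with hx
  have hx_le : x ≤ 1 / 2 := by rw [hx, div_le_iff₀ (by positivity)]; linarith
  -- since `n x = 2`, the product equals `2 + x - x²`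
  have hexponent : (n - 1 : ℕ) * (x + x ^ 2) ≤ 9 / 4 := by
    have hnx : (n : ℝ) * x = 2 := mul_div_cancel₀ _ (by positivity)
    rw [Nat.cast_sub (by omega), Nat.cast_one]
    nlinarith [sq_nonneg (x - 1 / 2)]
  calc (0.1 : ℝ) ≤ exp (-(9 / 4)) := by
        rw [exp_neg, le_inv_comm₀ (by norm_num) (exp_pos _)]
        linarith [exp_nine_div_four_lt_ten]
    _ ≤ exp (-(x + x ^ 2)) ^ (n - 1) := by
        rw [← exp_nat_mul, exp_le_exp]; linarith
    _ ≤ (1 - x) ^ (n - 1) := by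
        gcongr
        exact exp_neg_add_sq_le_one_sub (by positivity) hx_le

noncomputable def truncatedGeometric (A : ℕ) : Fin A → ℝ := fun k : Fin A =>
  if (k : ℕ) = A - 1 then (2 : ℝ) ^ (-(A : ℤ) + 1) else (2 : ℝ) ^ (-((k : ℕ) : ℤ) - 1)

lemma truncatedGeometric_eq {A : ℕ} (k : Fin A) :
    truncatedGeometric A k = 1 / 2 ^ min ((k : ℕ) + 1) (A - 1) := by
  have hk := k.isLt
  unfold truncatedGeometric
  split_ifs with hlast
  · rw [min_eq_right (by omega), show -(A : ℤ) + 1 = -((A - 1 : ℕ) : ℤ) by omega, zpow_neg,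
      zpow_natCast, one_div]
  · rw [min_eq_left (by omega), show -((k : ℕ) : ℤ) - 1 = -(((k : ℕ) + 1 : ℕ) : ℤ) by omega,
      zpow_neg, zpow_natCast, one_div]

lemma one_div_two_pow_mem_Icc {n : ℝ} {m : ℕ} (hlow : 2 ^ m ≤ n) (hhigh : n ≤ 2 ^ (m + 1)) :
    1 / 2 ^ m ∈ Icc (1 / n) (2 / n) := by
  have hpos : (0 : ℝ) < 2 ^ m := by positivity
  constructor
  · exact one_div_le_one_div_of_le hpos hlow
  · rw [div_le_div_iff₀ hpos (hpos.trans_le hlow)]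
    rw [pow_succ] at hhigh
    linarith

lemma exists_truncatedGeometric_mem_Icc {A n : ℕ} (hn : 2 ≤ n) (hnA : n ≤ 2 ^ A) :
    ∃ k : Fin A, truncatedGeometric A k ∈ Icc (1 / (n : ℝ)) (2 / n) := by
  set L := Nat.log 2 n
  have hL : 1 ≤ L := Nat.le_log_of_pow_le (by norm_num) (by simpa using hn)
  have hLA : L ≤ A := (Nat.log_mono_right hnA).trans (Nat.log_pow (by norm_num) A).le
  refine ⟨⟨L - 1, by omega⟩, ?_⟩
  rw [truncatedGeometric_eq, Fin.val_mk, Nat.sub_add_cancel hL]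
  have hlow : 2 ^ min L (A - 1) ≤ n :=
    (Nat.pow_le_pow_right (by norm_num) (min_le_left _ _)).trans
      (Nat.pow_log_le_self 2 (by omega))
  have hhigh : n ≤ 2 ^ (min L (A - 1) + 1) := by
    rcases le_total L (A - 1) with h | h
    · rw [min_eq_left h]; exact (Nat.lt_pow_succ_log_self (by norm_num) n).le
    · rw [min_eq_right h, Nat.sub_add_cancel (by omega)]; exact hnA
  exact one_div_two_pow_mem_Icc (by exact_mod_cast hlow) (by exact_mod_cast hhigh)

lemma one_sub_two_div_pow_le {n p : ℝ} (hn : 2 ≤ n) (hp : p ∈ Icc (1 / n) (2 / n)) (m : ℕ) :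
    (1 - 2 / n) ^ m ≤ n * p * (1 - p) ^ m := by
  have hnpos : 0 < n := by linarith
  have hnp : 1 ≤ n * p := by rw [← div_le_iff₀' hnpos]; exact hp.1
  have hbase : 0 ≤ 1 - 2 / n := by rw [sub_nonneg, div_le_one hnpos]; exact hn
  have hp_le : 1 - 2 / n ≤ 1 - p := by linarith [hp.2]
  calc (1 - 2 / n) ^ m ≤ (1 - p) ^ m := by gcongr
    _ ≤ n * p * (1 - p) ^ m := le_mul_of_one_le_left (pow_nonneg (hbase.trans hp_le) m) hnp

theorem exists_rare_arm_general (A : ℕ)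
    (μ : Fin A → ℝ)
    (hμ : μ = fun k : Fin A => if (k : ℕ) = A - 1 then (2 : ℝ) ^ (-(A : ℤ) + 1)
      else (2 : ℝ) ^ (-((k : ℕ) : ℤ) - 1))
    (n : ℕ) (hn8 : 8 ≤ n) (hn2 : n ≤ 2 ^ A) :
    ∃ k : Fin A, 1 / (n : ℝ) ≤ μ k ∧ μ k ≤ 2 / n ∧
      (1 - 2 / (n : ℝ)) ^ (n - 1) ≤ n * μ k * (1 - μ k) ^ (n - 1) ∧
      (0.1 : ℝ) ≤ (1 - 2 / (n : ℝ)) ^ (n - 1) := by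
  subst hμ
  obtain ⟨k, hk⟩ := exists_truncatedGeometric_mem_Icc (by omega : 2 ≤ n) hn2
  exact ⟨k, hk.1, hk.2, one_sub_two_div_pow_le (by exact_mod_cast (by omega : 2 ≤ n)) hk _,
    one_tenth_le_one_sub_two_div_pow (by omega)⟩

/-- For the geometric behavior distribution μ(a_k) = 2^{−k} (k < A) with
μ(a_A) = 2^{−A+1}, every 8 ≤ n ≤ 2^A admits an arm with μ(a_k) ∈ [1/n, 2/n],
and the probability of exactly one occurrence of that arm in n i.i.d. draws,
n·μ_k·(1−μ_k)^{n−1}, is at least (1 − 2/n)^{n−1} ≥ 0.1. -/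
theorem exists_rare_arm (A : ℕ) (hA : 8 ≤ A)
    (μ : Fin A → ℝ)
    (hμ : μ = fun k : Fin A => if (k : ℕ) = A - 1 then (2 : ℝ) ^ (-(A : ℤ) + 1)
      else (2 : ℝ) ^ (-((k : ℕ) : ℤ) - 1))
    (n : ℕ) (hn8 : 8 ≤ n) (hn2 : n ≤ 2 ^ A) :
    ∃ k : Fin A, 1 / (n : ℝ) ≤ μ k ∧ μ k ≤ 2 / n ∧
      (1 - 2 / (n : ℝ)) ^ (n - 1) ≤ n * μ k * (1 - μ k) ^ (n - 1) ∧
      (0.1 : ℝ) ≤ (1 - 2 / (n : ℝ)) ^ (n - 1) :=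
  exists_rare_arm_general A μ hμ n hn8 hn2
end
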